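/- arXiv:1809.00739 — 2 statements merged into one kernel-verified Lean document; each statement's English description precedes it below -/
import Mathlib

section
/- Let G be a (P6, diamond)-free graph containing an induced 5-cycle v1v2v3v4v5, and for each i let A_i be the set of vertices outside the cycle whose only neighbour on the cycle is v_i. Then A_i is complete to A_{i+2}: every vertex of A_i is adjacent to every vertex of A_{i+2} (indices modulo 5). -/
/-! If `a ∈ A i` and `b ∈ A (i + 2)` were non-adjacent, then going the long way round the cycle,
`a, v i, v (i - 1), v (i - 2), v (i - 3) = v (i + 2), b` would be an induced `P6`. -/

open SimpleGraph

def diamond : SimpleGraph (Fin 4) := (⊤ : SimpleGraph (Fin 4)).deleteEdges {s(0, 1)}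

namespace SimpleGraph

variable {V W : Type*} {G : SimpleGraph V} {H : SimpleGraph W}

theorem injective_of_adj_iff (hH : ∀ x y, (∀ z, H.Adj x z ↔ H.Adj y z) → x = y) {f : W → V}
    (hf : ∀ x y, G.Adj (f x) (f y) ↔ H.Adj x y) : Function.Injective f :=
  fun x y hxy => hH x y fun z => by rw [← hf, ← hf, hxy]

def Embedding.ofAdjIff (hH : ∀ x y, (∀ z, H.Adj x z ↔ H.Adj y z) → x = y) (f : W → V)
    (hf : ∀ x y, G.Adj (f x) (f y) ↔ H.Adj x y) : H ↪g G :=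
  ⟨⟨f, injective_of_adj_iff hH hf⟩, hf _ _⟩

theorem pathGraph_six_eq_of_forall_adj_iff :
    ∀ x y : Fin 6, (∀ z, (pathGraph 6).Adj x z ↔ (pathGraph 6).Adj y z) → x = y := by
  simp only [pathGraph_adj]
  decide

theorem nonempty_pathGraph_six_embedding_of_not_adj {w : Fin 5 → V} {a b : V}
    (hw : ∀ i j, G.Adj (w i) (w j) ↔ j = i + 1 ∨ i = j + 1)
    (ha : ∀ j, G.Adj a (w j) ↔ j = 0) (hb : ∀ j, G.Adj b (w j) ↔ j = 2) (hab : ¬ G.Adj a b) :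
    Nonempty (pathGraph 6 ↪g G) := by
  have ha' : ∀ j, G.Adj (w j) a ↔ j = 0 := fun j => (G.adj_comm _ _).trans (ha j)
  have hb' : ∀ j, G.Adj (w j) b ↔ j = 2 := fun j => (G.adj_comm _ _).trans (hb j)
  refine ⟨.ofAdjIff pathGraph_six_eq_of_forall_adj_iff ![a, w 0, w 4, w 3, w 2, b] ?_⟩
  intro x y
  fin_cases x <;> fin_cases y <;> simp [pathGraph_adj, hw, ha, hb, ha', hb', hab, mt Adj.symm hab]

end SimpleGraph

theorem stmt_3_general {V : Type*} (G : SimpleGraph V)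
    (hP6 : ¬ Nonempty (pathGraph 6 ↪g G))
    (v : Fin 5 → V)
    (hC5 : ∀ i j, G.Adj (v i) (v j) ↔ j = i + 1 ∨ i = j + 1)
    (A : Fin 5 → Set V)
    (hA : ∀ i, A i = {u | u ∉ Set.range v ∧ ∀ j, G.Adj u (v j) ↔ j = i}) :
    ∀ i, ∀ a ∈ A i, ∀ b ∈ A (i + 2), G.Adj a b := by
  intro i a ha b hb
  rw [hA] at ha hb
  by_contra hab
  refine hP6 (nonempty_pathGraph_six_embedding_of_not_adj (w := fun c => v (i + c)) ?_ ?_ ?_ hab)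
  · intro c d
    simp only [hC5, add_assoc, add_right_inj]
  · intro c
    simpa using ha.2 (i + c)
  · intro c
    simpa using hb.2 (i + c)

theorem stmt_3 {V : Type*} (G : SimpleGraph V)
    (hP6 : ¬ Nonempty (pathGraph 6 ↪g G))
    (hD : ¬ Nonempty (diamond ↪g G))
    (v : Fin 5 → V) (hv : Function.Injective v)
    (hC5 : ∀ i j, G.Adj (v i) (v j) ↔ j = i + 1 ∨ i = j + 1)
    (A : Fin 5 → Set V)
    (hA : ∀ i, A i = {u | u ∉ Set.range v ∧ ∀ j, G.Adj u (v j) ↔ j = i}) :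
    ∀ i, ∀ a ∈ A i, ∀ b ∈ A (i + 2), G.Adj a b :=
  stmt_3_general G hP6 v hC5 A hA
end

section
/- Let G be a diamond-free graph containing an induced 5-cycle v1v2v3v4v5. Let C_{i,i+2} be the vertices outside the cycle adjacent exactly to v_i and v_{i+2}, and B_{j,j+1} the vertices adjacent exactly to v_j and v_{j+1}. If j ≠ i+3 (mod 5), then C_{i,i+2} is anti-complete to B_{j,j+1}; moreover, each vertex of C_{i,i+2} has at most one neighbour in B_{i+3,i+4}. -/
open SimpleGraph

/-!
Everything follows from one property of diamond-free graphs: the common neighbourhood of an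
edge is a clique. If `c ∈ C i` had a neighbour `b ∈ B j` with `j ≠ i + 3`, then `c` would be
adjacent to exactly one end of the cycle edge `v j v (j+1)` seen by `b`; the other end and `c`
would be two non-adjacent common neighbours of the edge from `b` to that shared end. Two distinct
neighbours `b₁, b₂ ∈ B (i + 3)` of `c` are common neighbours of the edge `v (i+3) v (i+4)`, hence
adjacent, and then `c` and `v (i+3)` are non-adjacent common neighbours of the edge `b₁ b₂`.
-/

section DiamondFree

variable {V : Type*} {G : SimpleGraph V}

theorem isClique_commonNeighbors_of_diamond_free (hD : ¬ Nonempty (diamond ↪g G)) {x y : V}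
    (hxy : G.Adj x y) : G.IsClique (G.commonNeighbors x y) := by
  intro a ha b hb hab
  rw [mem_commonNeighbors] at ha hb
  obtain ⟨hxa, hya⟩ := ha
  obtain ⟨hxb, hyb⟩ := hb
  by_contra hnab
  have := hxa.ne; have := hya.ne; have := hxb.ne; have := hyb.ne; have := hxy.ne
  refine hD ⟨⟨⟨![a, b, x, y], ?_⟩, ?_⟩⟩
  · intro i j h
    fin_cases i <;> fin_cases j <;> simp_all
  · intro i j
    change G.Adj (![a, b, x, y] i) (![a, b, x, y] j) ↔ diamond.Adj i j
    fin_cases i <;> fin_cases j <;>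
      simp_all [diamond, deleteEdges_adj, adj_comm]

section InducedFiveCycle

variable (hD : ¬ Nonempty (diamond ↪g G)) {v : Fin 5 → V}
  (hcycle : ∀ i, G.Adj (v i) (v (i + 1)))
include hD hcycle

theorem not_adj_of_adj_skip_of_adj_consecutive {i j : Fin 5} (hj : j ≠ i + 3) {b c : V}
    (hb : ∀ k, G.Adj b (v k) ↔ k = j ∨ k = j + 1) (hcv : c ∉ Set.range v)
    (hc : ∀ k, G.Adj c (v k) ↔ k = i ∨ k = i + 2) : ¬ G.Adj c b := by
  have hexactly_one : G.Adj c (v j) ↔ ¬ G.Adj c (v (j + 1)) := by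
    have : ∀ i j : Fin 5, j ≠ i + 3 → ((j = i ∨ j = i + 2) ↔ ¬ (j + 1 = i ∨ j + 1 = i + 2)) := by
      decide
    rw [hc, hc]; exact this i j hj
  have hne : ∀ k, c ≠ v k := fun k h => hcv ⟨k, h.symm⟩
  have hbj := (hb j).2 (Or.inl rfl)
  have hbj1 := (hb (j + 1)).2 (Or.inr rfl)
  have hjj1 : G.Adj (v j) (v (j + 1)) := hcycle _
  intro hcb
  by_cases hcj : G.Adj c (v j)
  · exact hexactly_one.1 hcj <| isClique_commonNeighbors_of_diamond_free hD hbj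
      ⟨hcb.symm, hcj.symm⟩ ⟨hbj1, hjj1⟩ (hne _)
  · have hcj1 : G.Adj c (v (j + 1)) := not_not.1 (hexactly_one.not.1 hcj)
    exact hcj <| isClique_commonNeighbors_of_diamond_free hD hbj1
      ⟨hcb.symm, hcj1.symm⟩ ⟨hbj, hjj1.symm⟩ (hne _)

theorem eq_of_adj_skip_of_adj_opposite {i : Fin 5} {b₁ b₂ c : V}
    (hb₁ : ∀ k, G.Adj b₁ (v k) ↔ k = i + 3 ∨ k = i + 3 + 1)
    (hb₂ : ∀ k, G.Adj b₂ (v k) ↔ k = i + 3 ∨ k = i + 3 + 1) (hcv : c ∉ Set.range v)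
    (hc : ∀ k, G.Adj c (v k) ↔ k = i ∨ k = i + 2) (hcb₁ : G.Adj c b₁) (hcb₂ : G.Adj c b₂) :
    b₁ = b₂ := by
  by_contra hne
  have hb₁b₂ : G.Adj b₁ b₂ := isClique_commonNeighbors_of_diamond_free hD (hcycle _)
    ⟨((hb₁ _).2 (Or.inl rfl)).symm, ((hb₁ _).2 (Or.inr rfl)).symm⟩
    ⟨((hb₂ _).2 (Or.inl rfl)).symm, ((hb₂ _).2 (Or.inr rfl)).symm⟩ hne
  have hcv3 : G.Adj c (v (i + 3)) := isClique_commonNeighbors_of_diamond_free hD hb₁b₂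
    ⟨hcb₁.symm, hcb₂.symm⟩ ⟨(hb₁ _).2 (Or.inl rfl), (hb₂ _).2 (Or.inl rfl)⟩
    (fun h => hcv ⟨_, h.symm⟩)
  have : ∀ i : Fin 5, ¬ (i + 3 = i ∨ i + 3 = i + 2) := by decide
  exact this i ((hc _).1 hcv3)

end InducedFiveCycle

end DiamondFree

theorem stmt_11_general {V : Type*} (G : SimpleGraph V)
    (hD : ¬ Nonempty (diamond ↪g G))
    (v : Fin 5 → V)
    (hC5 : ∀ i j, G.Adj (v i) (v j) ↔ j = i + 1 ∨ i = j + 1)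
    (B : Fin 5 → Set V)
    (hB : ∀ i, B i = {u | u ∉ Set.range v ∧ ∀ j, G.Adj u (v j) ↔ (j = i ∨ j = i + 1)})
    (C : Fin 5 → Set V)
    (hC : ∀ i, C i = {u | u ∉ Set.range v ∧ ∀ j, G.Adj u (v j) ↔ (j = i ∨ j = i + 2)}) :
    (∀ i j, j ≠ i + 3 → ∀ c ∈ C i, ∀ b ∈ B j, ¬ G.Adj c b) ∧
      (∀ i, ∀ c ∈ C i, ∀ b₁ ∈ B (i + 3), ∀ b₂ ∈ B (i + 3),
        G.Adj c b₁ → G.Adj c b₂ → b₁ = b₂) := by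
  have hcycle : ∀ i, G.Adj (v i) (v (i + 1)) := fun i => (hC5 _ _).2 (Or.inl rfl)
  simp only [hB, hC, Set.mem_ofPred_eq]
  refine ⟨?_, ?_⟩
  · rintro i j hj c ⟨hcv, hc⟩ b ⟨-, hb⟩
    exact not_adj_of_adj_skip_of_adj_consecutive hD hcycle hj hb hcv hc
  · rintro i c ⟨hcv, hc⟩ b₁ ⟨-, hb₁⟩ b₂ ⟨-, hb₂⟩
    exact eq_of_adj_skip_of_adj_opposite hD hcycle hb₁ hb₂ hcv hc

theorem stmt_11 {V : Type*} (G : SimpleGraph V)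
    (hD : ¬ Nonempty (diamond ↪g G))
    (v : Fin 5 → V) (hv : Function.Injective v)
    (hC5 : ∀ i j, G.Adj (v i) (v j) ↔ j = i + 1 ∨ i = j + 1)
    (B : Fin 5 → Set V)
    (hB : ∀ i, B i = {u | u ∉ Set.range v ∧ ∀ j, G.Adj u (v j) ↔ (j = i ∨ j = i + 1)})
    (C : Fin 5 → Set V)
    (hC : ∀ i, C i = {u | u ∉ Set.range v ∧ ∀ j, G.Adj u (v j) ↔ (j = i ∨ j = i + 2)}) :
    (∀ i j, j ≠ i + 3 → ∀ c ∈ C i, ∀ b ∈ B j, ¬ G.Adj c b) ∧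
      (∀ i, ∀ c ∈ C i, ∀ b₁ ∈ B (i + 3), ∀ b₂ ∈ B (i + 3),
        G.Adj c b₁ → G.Adj c b₂ → b₁ = b₂) :=
  stmt_11_general G hD v hC5 B hB C hC
end
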